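/- arXiv:2211.14252 — 4 statements merged into one kernel-verified Lean document; each statement's English description precedes it below -/
import Mathlib

section
/- (Equivalence of geometric and combinatorial criticality.) Fix a nonnegative integer c. The following are equivalent: (1) for every integer p ≥ 1, every sequence j_0 := −1 < j_1 < ⋯ < j_p < k+1 =: j_{p+1} with i_{j_q+1} − i_{j_q} − 1 − [j_q ∈ {ℓ−1,ℓ}] > 0 for all q ∈ {1,…,p}, and all positive integers κ_1,…,κ_p with κ_q ≤ i_{j_q+1} − i_{j_q} − 1 − [j_q ∈ {ℓ−1,ℓ}], the Minkowski sum K′ of κ_q copies of K_{j_q} over q = 1,…,p satisfies dim K′ ≥ κ_1 + ⋯ + κ_p + c; (2) for every integer p ≥ 1 and every such sequence j_0 := −1 < j_1 < ⋯ < j_p < k+1 =: j_{p+1}, one has Σ_{q=0}^{p} [j_q+1 < j_{q+1}] · |ᾱ_{>x_{j_q+1},<x_{j_{q+1}}}| ≤ |{q ∈ {1,…,p} : j_q ∈ {ℓ−1,ℓ}}| − c + Σ_{q=0}^{p} [j_q+1 < j_{q+1}] · (i_{j_{q+1}} − i_{j_q+1} − 1). -/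
open Pointwise

namespace Stanley

variable {A : Type*}

/-- Two elements of a partially ordered set are *incomparable*. -/
def Incomp [PartialOrder A] (a b : A) : Prop :=
  ¬ a ≤ b ∧ ¬ b ≤ a

section PosetDefs

variable [PartialOrder A] (n k : ℕ) (x : ℤ → A) (i : ℤ → ℤ) (ℓ : ℤ)

/-- A linear extension of the `n`-element poset `ᾱ`, modelled as an injective
order-preserving map into `{1,…,n} ⊆ ℤ` (hence an order-preserving bijection
onto `{1,…,n}` since `card ᾱ = n`). -/
def IsLinExt (σ : A → ℤ) : Prop :=
  Function.Injective σ ∧ (∀ a : A, 1 ≤ σ a ∧ σ a ≤ (n : ℤ)) ∧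
    ∀ w z : A, w ≤ z → σ w ≤ σ z

/-- The set `N_∘` of linear extensions placing `x_j` at `i_j` for `j ≠ ℓ` and
`x_ℓ` at `i_ℓ + e`, where `e = 1_∘ ∈ {-1,0,1}`. -/
def N (e : ℤ) : Set (A → ℤ) :=
  { σ | IsLinExt n σ ∧ (∀ j : ℤ, 1 ≤ j → j ≤ (k : ℤ) → j ≠ ℓ → σ (x j) = i j) ∧
      σ (x ℓ) = i ℓ + e }

/-- The position of the *lower companion* of `x_ℓ` in a linear extension of `N_∘`. -/
def lowPos (e : ℤ) : ℤ := if e = -1 then i ℓ else i ℓ - 1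

/-- The position of the *upper companion* of `x_ℓ` in a linear extension of `N_∘`. -/
def highPos (e : ℤ) : ℤ := if e = 1 then i ℓ else i ℓ + 1

/-- `N_∘(⋆,∗)` : here `lowInc = true` encodes `⋆ = ≁` (lower companion incomparable
to `x_ℓ`) and `lowInc = false` encodes `⋆ = ∼`; similarly `upInc` for the upper
companion. -/
def NN (e : ℤ) (lowInc upInc : Bool) : Set (A → ℤ) :=
  { σ | σ ∈ N n k x i ℓ e ∧
      (∀ a : A, σ a = lowPos i ℓ e → (Incomp a (x ℓ) ↔ lowInc = true)) ∧
      (∀ a : A, σ a = highPos i ℓ e → (Incomp a (x ℓ) ↔ upInc = true)) }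

/-- `x_r < w`, for `r ∈ {0,…,k+1}`, with the convention that `x_0` is below every
element of `ᾱ` (and `x_{k+1}` above, so that `x_{k+1} < w` never holds). -/
def gtX (r : ℤ) (w : A) : Prop := r = 0 ∨ (1 ≤ r ∧ r ≤ (k : ℤ) ∧ x r < w)

/-- `w < x_s`, with the convention that `x_{k+1}` is above every element of `ᾱ`. -/
def ltX (s : ℤ) (w : A) : Prop := s = (k : ℤ) + 1 ∨ (1 ≤ s ∧ s ≤ (k : ℤ) ∧ w < x s)

/-- `x_r ≤ w`, with the same conventions. -/
def geX (r : ℤ) (w : A) : Prop := r = 0 ∨ (1 ≤ r ∧ r ≤ (k : ℤ) ∧ x r ≤ w)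

/-- `w ≤ x_s`, with the same conventions. -/
def leX (s : ℤ) (w : A) : Prop := s = (k : ℤ) + 1 ∨ (1 ≤ s ∧ s ≤ (k : ℤ) ∧ w ≤ x s)

/-- `ᾱ_{>x_r,<x_s}`. -/
def betw (r s : ℤ) : Set A := { w | gtX k x r w ∧ ltX k x s w }

/-- `ᾱ_{≥x_r,≤x_s}` (only genuine elements of `ᾱ`; the adjoined `x_0, x_{k+1}` are
never elements). -/
def betwIcc (r s : ℤ) : Set A := { w | geX k x r w ∧ leX k x s w }

/-- `α = {y_1,…,y_{n-k}}` : the complement of the chain `x_1 < ⋯ < x_k` in `ᾱ`. -/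
def alphaSet : Set A := { a | ∀ j : ℤ, 1 ≤ j → j ≤ (k : ℤ) → a ≠ x j }

/-- `α_{>x_r,<x_s}`. -/
def betwA (r s : ℤ) : Set A := { w | w ∈ alphaSet k x ∧ gtX k x r w ∧ ltX k x s w }

/-- `β_m := α \ (α_{<x_m} ∪ α_{>x_{m+1}})` for `m ∈ {0,…,k}`, and `β_m := ∅`
otherwise. -/
def beta (m : ℤ) : Set A :=
  { a | (0 ≤ m ∧ m ≤ (k : ℤ)) ∧ a ∈ alphaSet k x ∧ ¬ ltX k x m a ∧ ¬ gtX k x (m + 1) a }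

/-- A *splitting pair* `(r,s)` : `0 ≤ r+1 < s ≤ k+1` and `(r+1,s) ≠ (0,k+1)`. -/
def SplitPair (r s : ℤ) : Prop :=
  0 ≤ r + 1 ∧ r + 1 < s ∧ s ≤ (k : ℤ) + 1 ∧ ¬(r + 1 = 0 ∧ s = (k : ℤ) + 1)

/-- The combinatorial (super)criticality condition of Definition 2.9 of the paper:
for every `p ≥ 1` and every admissible sequence `j_0 = -1 < j_1 < ⋯ < j_p < k+1 = j_{p+1}`,
`Σ_q [j_q+1 < j_{q+1}]·|ᾱ_{>x_{j_q+1},<x_{j_{q+1}}}|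
  ≤ |{q ∈ [p] : j_q ∈ {ℓ-1,ℓ}}| - c + Σ_q [j_q+1 < j_{q+1}]·(i_{j_{q+1}} - i_{j_q+1} - 1)`.
`c = 2` gives supercriticality, `c = 1` criticality. -/
def CritCond (c : ℤ) : Prop :=
  ∀ p : ℕ, 1 ≤ p → ∀ j : ℕ → ℤ,
    j 0 = -1 → j (p + 1) = (k : ℤ) + 1 →
    (∀ q : ℕ, q ≤ p → j q < j (q + 1)) →
    (∀ q : ℕ, 1 ≤ q → q ≤ p →
        0 < i (j q + 1) - i (j q) - 1 - (if j q = ℓ - 1 ∨ j q = ℓ then 1 else 0)) →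
    (∑ q ∈ Finset.range (p + 1),
        if j q + 1 < j (q + 1) then ((betw k x (j q + 1) (j (q + 1))).ncard : ℤ) else 0)
      ≤ (((Finset.Icc 1 p).filter fun q => j q = ℓ - 1 ∨ j q = ℓ).card : ℤ) - c
        + ∑ q ∈ Finset.range (p + 1),
            (if j q + 1 < j (q + 1) then i (j (q + 1)) - i (j q + 1) - 1 else 0)

/-- The poset `ᾱ` is *supercritical*. -/
def Supercritical : Prop := 0 < (N n k x i ℓ 0).ncard ∧ CritCond k x i ℓ 2

/-- The poset `ᾱ` is *critical*. -/
def Critical : Prop := 0 < (N n k x i ℓ 0).ncard ∧ CritCond k x i ℓ 1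

/-- The order polytope `O_β ⊆ ℝ^α ⊆ ℝ^ᾱ` of `β ⊆ α` (coordinates outside `β` vanish). -/
def orderPolytope (β : Set A) : Set (A → ℝ) :=
  { t | (∀ a : A, a ∉ β → t a = 0) ∧ (∀ a ∈ β, 0 ≤ t a ∧ t a ≤ 1) ∧
      ∀ a b : A, a ∈ β → b ∈ β → a ≤ b → t a ≤ t b }

/-- The polytope `K_m = {t ∈ O_α : t_j = 0 if y_j < x_m, t_j = 1 if y_j > x_{m+1}}`. -/
def Kpoly (m : ℤ) : Set (A → ℝ) :=
  { t | t ∈ orderPolytope (alphaSet k x) ∧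
      (∀ a ∈ alphaSet k x, ltX k x m a → t a = 0) ∧
      (∀ a ∈ alphaSet k x, gtX k x (m + 1) a → t a = 1) }

end PosetDefs

/-- The standing hypotheses: `ᾱ` is a poset with `n` elements containing the chain
`x_1 < ⋯ < x_k`, `0 = i_0 < 1 ≤ i_1 < ⋯ < i_k ≤ n < n+1 = i_{k+1}`, `ℓ ∈ [k]`, and
`i_{ℓ-1} + 1 < i_ℓ < i_{ℓ+1} - 1`. -/
structure Setup [PartialOrder A] [Fintype A] (n k : ℕ) (x : ℤ → A) (i : ℤ → ℤ)
    (ℓ : ℤ) : Prop where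
  hk1 : 1 ≤ k
  hkn : k ≤ n
  hcard : Fintype.card A = n
  hchain : ∀ j j' : ℤ, 1 ≤ j → j < j' → j' ≤ (k : ℤ) → x j < x j'
  hi0 : i 0 = 0
  hitop : i ((k : ℤ) + 1) = (n : ℤ) + 1
  himono : ∀ j j' : ℤ, 1 ≤ j → j < j' → j' ≤ (k : ℤ) → i j < i j'
  hi1 : 1 ≤ i 1
  hik : i (k : ℤ) ≤ (n : ℤ)
  hl1 : 1 ≤ ℓ
  hlk : ℓ ≤ (k : ℤ)
  hgap1 : i (ℓ - 1) + 1 < i ℓ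
  hgap2 : i ℓ + 1 < i (ℓ + 1)


/-- The geometric criticality condition (Proposition 5.5(1)): for every admissible
sequence `j` and admissible positive multiplicities `κ`, the Minkowski sum `K'` of
`κ_q` copies of `K_{j_q}` satisfies `dim K' ≥ κ_1 + ⋯ + κ_p + c`. -/
def DimCond {A : Type*} [PartialOrder A] [Fintype A]
    (k : ℕ) (x : ℤ → A) (i : ℤ → ℤ) (ℓ : ℤ) (c : ℕ) : Prop :=
  ∀ p : ℕ, 1 ≤ p → ∀ j : ℕ → ℤ,
    j 0 = -1 → j (p + 1) = (k : ℤ) + 1 →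
    (∀ q : ℕ, q ≤ p → j q < j (q + 1)) →
    (∀ q : ℕ, 1 ≤ q → q ≤ p →
        0 < i (j q + 1) - i (j q) - 1 - (if j q = ℓ - 1 ∨ j q = ℓ then 1 else 0)) →
    ∀ κ : ℕ → ℕ,
      (∀ q : ℕ, 1 ≤ q → q ≤ p → 1 ≤ κ q ∧
          (κ q : ℤ) ≤ i (j q + 1) - i (j q) - 1 - (if j q = ℓ - 1 ∨ j q = ℓ then 1 else 0)) →
      ((∑ q ∈ Finset.Icc 1 p, κ q : ℕ) : ℤ) + (c : ℤ) ≤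
        (Module.finrank ℝ ↥(vectorSpan ℝ
            (∑ q ∈ Finset.Icc 1 p, ∑ _m ∈ Finset.range (κ q), Kpoly k x (j q))) : ℤ)

section Generic
variable {M : Type*} [AddCommGroup M] [Module ℝ M]

theorem vectorSpan_add' (s t : Set M) (hs : s.Nonempty) (ht : t.Nonempty) :
    vectorSpan ℝ (s + t) = vectorSpan ℝ s ⊔ vectorSpan ℝ t := by
  rw [vectorSpan_def, vectorSpan_def, vectorSpan_def]
  apply le_antisymm
  · rw [Submodule.span_le]
    rintro v ⟨u, hu, w, hw, rfl⟩
    rcases hu with ⟨a, ha, b, hb, rfl⟩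
    rcases hw with ⟨a', ha', b', hb', rfl⟩
    show (a + b) -ᵥ (a' + b') ∈ _
    have : (a + b) -ᵥ (a' + b') = (a -ᵥ a') + (b -ᵥ b') := by
      simp [vsub_eq_sub]; abel
    rw [this]
    exact Submodule.add_mem_sup (Submodule.subset_span (Set.vsub_mem_vsub ha ha'))
      (Submodule.subset_span (Set.vsub_mem_vsub hb hb'))
  · obtain ⟨a0, ha0⟩ := hs
    obtain ⟨b0, hb0⟩ := ht
    apply sup_le <;> rw [Submodule.span_le] <;> rintro v ⟨u, hu, w, hw, rfl⟩ <;>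
      show u -ᵥ w ∈ _
    · have : u -ᵥ w = (u + b0) -ᵥ (w + b0) := by simp [vsub_eq_sub]
      rw [this]
      exact Submodule.subset_span (Set.vsub_mem_vsub (Set.add_mem_add hu hb0) (Set.add_mem_add hw hb0))
    · have : u -ᵥ w = (a0 + u) -ᵥ (a0 + w) := by simp [vsub_eq_sub]
      rw [this]
      exact Submodule.subset_span (Set.vsub_mem_vsub (Set.add_mem_add ha0 hu) (Set.add_mem_add ha0 hw))

omit [Module ℝ M] in
theorem sum_nonempty' {ι : Type*} (F : Finset ι) (f : ι → Set M) (h : ∀ i ∈ F, (f i).Nonempty) :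
    (∑ i ∈ F, f i).Nonempty := by
  classical
  induction F using Finset.induction with
  | empty => exact ⟨0, rfl⟩
  | insert a F' hni ih =>
    rw [Finset.sum_insert hni]
    obtain ⟨u, hu⟩ := h a (Finset.mem_insert_self a F')
    obtain ⟨w, hw⟩ := ih (fun i hi => h i (Finset.mem_insert_of_mem hi))
    exact ⟨u + w, Set.add_mem_add hu hw⟩

theorem vectorSpan_finsum' {ι : Type*} (F : Finset ι) (f : ι → Set M)
    (h : ∀ i ∈ F, (f i).Nonempty) :
    vectorSpan ℝ (∑ i ∈ F, f i) = ⨆ i ∈ F, vectorSpan ℝ (f i) := by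
  classical
  induction F using Finset.induction with
  | empty =>
      rw [Finset.sum_empty, show (0 : Set M) = {0} from rfl, vectorSpan_singleton]
      simp
  | insert a F' hni ih =>
    rw [Finset.sum_insert hni,
      vectorSpan_add' _ _ (h a (Finset.mem_insert_self a F'))
        (sum_nonempty' F' f (fun i hi => h i (Finset.mem_insert_of_mem hi))),
      ih (fun i hi => h i (Finset.mem_insert_of_mem hi))]
    exact (Finset.iSup_insert a F' fun i => vectorSpan ℝ (f i)).symm

end Generic



def suppSub (S : Set A) : Submodule ℝ (A → ℝ) where
  carrier := {f | ∀ a ∉ S, f a = 0}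
  add_mem' hf hg a ha := by simp [hf a ha, hg a ha]
  zero_mem' a _ := rfl
  smul_mem' c f hf a ha := by simp [hf a ha]

theorem mem_suppSub {S : Set A} {f : A → ℝ} : f ∈ suppSub S ↔ ∀ a ∉ S, f a = 0 := Iff.rfl

noncomputable def suppEquiv (S : Set A) : suppSub S ≃ₗ[ℝ] (S → ℝ) := by
  classical
  exact
  { toFun := fun f a => f.1 a.1
    invFun := fun g => ⟨fun a => if h : a ∈ S then g ⟨a, h⟩ else 0, fun a ha => by simp [ha]⟩
    map_add' := fun f g => rfl
    map_smul' := fun c f => rfl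
    left_inv := fun f => by
      ext a
      by_cases h : a ∈ S <;> simp [h]
      exact (f.2 a h).symm
    right_inv := fun g => by ext a; simp [a.2] }

theorem finrank_suppSub [Fintype A] (S : Set A) :
    Module.finrank ℝ (suppSub S) = S.ncard := by
  classical
  rw [(suppEquiv S).finrank_eq]
  rw [Module.finrank_pi]
  rw [Set.ncard_eq_toFinset_card']
  exact (Set.toFinset_card S).symm

theorem suppSub_mono {S T : Set A} (h : S ⊆ T) : suppSub S ≤ suppSub T :=
  fun f hf a ha => hf a (fun hm => ha (h hm))

theorem suppSub_iSup [Fintype A] {ι : Type*} (F : Finset ι) (g : ι → Set A) :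
    (⨆ i ∈ F, suppSub (g i)) = suppSub (⋃ i ∈ F, g i) := by
  classical
  apply le_antisymm
  · apply iSup_le; intro i; apply iSup_le; intro hi
    exact suppSub_mono (Set.subset_biUnion_of_mem hi)
  · intro f hf
    rw [← Finset.univ_sum_single f]
    apply Submodule.sum_mem
    intro a _
    by_cases ha : a ∈ ⋃ i ∈ F, g i
    · rw [Set.mem_iUnion₂] at ha
      obtain ⟨i, hi, hai⟩ := ha
      have : Pi.single a (f a) ∈ suppSub (g i) := by
        intro b hb
        have : b ≠ a := fun h => hb (h ▸ hai)
        simp [Pi.single_apply, this]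
      exact Submodule.mem_iSup_of_mem i (Submodule.mem_iSup_of_mem hi this)
    · have : f a = 0 := hf a ha
      rw [this]
      simp only [Pi.single_zero]
      exact Submodule.zero_mem _


attribute [local instance] Classical.propDecidable

section KV
attribute [local instance 10] Classical.propDecidable
variable [PartialOrder A] (k : ℕ) (x : ℤ → A) (m : ℤ)

/-- base point of `Kpoly m`. -/
noncomputable def tbase : A → ℝ :=
  fun a => if gtX k x (m+1) a ∧ a ∈ alphaSet k x then 1 else 0

/-- the point of `Kpoly m` corresponding to the up-set of `a` in `β_m`. -/
noncomputable def tup (a : A) : A → ℝ :=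
  fun b => if ((a ≤ b ∧ b ∈ beta k x m) ∨ gtX k x (m+1) b) ∧ b ∈ alphaSet k x then 1 else 0

variable {k x m}

lemma chain_lemmas (hchain : ∀ j j' : ℤ, 1 ≤ j → j < j' → j' ≤ (k : ℤ) → x j < x j')
    (hm0 : 0 ≤ m) (hmk : m ≤ (k : ℤ)) {a b : A} (hlt : ltX k x m a) (hgt : gtX k x (m+1) b)
    (hab : b ≤ a) : False := by
  rcases hlt with h | ⟨h1, h2, h3⟩
  · omega
  rcases hgt with h' | ⟨h1', h2', h3'⟩
  · omega
  · exact absurd ((h3'.trans_le hab).trans h3) (lt_asymm (hchain m (m+1) h1 (by omega) h2'))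

lemma gtX_mono {r : ℤ} {a b : A} (h : gtX k x r a) (hab : a ≤ b) : gtX k x r b := by
  rcases h with h | ⟨h1, h2, h3⟩
  · exact Or.inl h
  · exact Or.inr ⟨h1, h2, h3.trans_le hab⟩

lemma ltX_mono {s : ℤ} {a b : A} (h : ltX k x s b) (hab : a ≤ b) : ltX k x s a := by
  rcases h with h | ⟨h1, h2, h3⟩
  · exact Or.inl h
  · exact Or.inr ⟨h1, h2, hab.trans_lt h3⟩

lemma tbase_mem (hchain : ∀ j j' : ℤ, 1 ≤ j → j < j' → j' ≤ (k : ℤ) → x j < x j')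
    (hm0 : 0 ≤ m) (hmk : m ≤ (k : ℤ)) : tbase k x m ∈ Kpoly k x m := by
  refine ⟨⟨?_, ?_, ?_⟩, ?_, ?_⟩
  · intro a ha
    exact if_neg (fun h : _ ∧ a ∈ alphaSet k x => ha h.2)
  · intro a _
    unfold tbase
    split <;> norm_num
  · intro a b ha hb hab
    unfold tbase
    split
    · rename_i h
      rw [if_pos ⟨gtX_mono h.1 hab, hb⟩]
    · split <;> norm_num
  · intro a ha hlt
    unfold tbase
    rw [if_neg]
    rintro ⟨hgt, -⟩
    exact chain_lemmas hchain hm0 hmk hlt hgt le_rfl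
  · intro a ha hgt
    unfold tbase
    rw [if_pos ⟨hgt, ha⟩]

lemma tup_mem (hchain : ∀ j j' : ℤ, 1 ≤ j → j < j' → j' ≤ (k : ℤ) → x j < x j')
    (hm0 : 0 ≤ m) (hmk : m ≤ (k : ℤ)) {a : A} (ha : a ∈ beta k x m) :
    tup k x m a ∈ Kpoly k x m := by
  refine ⟨⟨?_, ?_, ?_⟩, ?_, ?_⟩
  · intro b hb
    exact if_neg (fun h : _ ∧ b ∈ alphaSet k x => hb h.2)
  · intro b _
    unfold tup
    split <;> norm_num
  · intro b c hb hc hbc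
    unfold tup
    split
    · rename_i h
      rcases h.1 with ⟨hab, hbβ⟩ | hg
      · rw [if_pos]
        refine ⟨?_, hc⟩
        by_cases hcβ : c ∈ beta k x m
        · exact Or.inl ⟨hab.trans hbc, hcβ⟩
        · refine Or.inr ?_
          have : ltX k x m c ∨ gtX k x (m+1) c := by
            by_contra hcon
            push_neg at hcon
            exact hcβ ⟨⟨hm0, hmk⟩, hc, hcon.1, hcon.2⟩
          rcases this with hlt | hgt
          · exact absurd (ltX_mono hlt hbc) hbβ.2.2.1
          · exact hgt
      · rw [if_pos ⟨Or.inr (gtX_mono hg hbc), hc⟩]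
    · split <;> norm_num
  · intro b hb hlt
    unfold tup
    rw [if_neg]
    rintro ⟨⟨hab, hbβ⟩ | hg, -⟩
    · exact hbβ.2.2.1 hlt
    · exact chain_lemmas hchain hm0 hmk hlt hg le_rfl
  · intro b hb hg
    unfold tup
    rw [if_pos ⟨Or.inr hg, hb⟩]

lemma tup_sub_tbase {a : A} (ha : a ∈ beta k x m) :
    tup k x m a - tbase k x m = fun b => if a ≤ b ∧ b ∈ beta k x m then 1 else 0 := by
  funext b
  simp only [Pi.sub_apply, tup, tbase]
  by_cases hβ : a ≤ b ∧ b ∈ beta k x m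
  · rw [if_pos ⟨Or.inl hβ, hβ.2.2.1⟩, if_pos hβ, if_neg]
    · norm_num
    · rintro ⟨hg, -⟩
      exact hβ.2.2.2.2 hg
  · rw [if_neg hβ]
    by_cases hg : gtX k x (m+1) b ∧ b ∈ alphaSet k x
    · rw [if_pos ⟨Or.inr hg.1, hg.2⟩, if_pos hg]; norm_num
    · rw [if_neg, if_neg hg]
      · norm_num
      · rintro ⟨h | h, hα⟩
        · exact hβ h
        · exact hg ⟨h, hα⟩

theorem vectorSpan_Kpoly [Fintype A]
    (hchain : ∀ j j' : ℤ, 1 ≤ j → j < j' → j' ≤ (k : ℤ) → x j < x j')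
    (hm0 : 0 ≤ m) (hmk : m ≤ (k : ℤ)) :
    vectorSpan ℝ (Kpoly k x m) = suppSub (beta k x m) := by
  have hval : ∀ t ∈ Kpoly k x m, ∀ a ∉ beta k x m,
      t a = (if gtX k x (m+1) a ∧ a ∈ alphaSet k x then 1 else 0) := by
    intro t ht a ha
    by_cases hα : a ∈ alphaSet k x
    · have : ltX k x m a ∨ gtX k x (m+1) a := by
        by_contra hcon
        push_neg at hcon
        exact ha ⟨⟨hm0, hmk⟩, hα, hcon.1, hcon.2⟩
      rcases this with hlt | hgt
      · rw [ht.2.1 a hα hlt, if_neg]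
        rintro ⟨hg, -⟩
        exact chain_lemmas hchain hm0 hmk hlt hg le_rfl
      · rw [ht.2.2 a hα hgt, if_pos ⟨hgt, hα⟩]
    · rw [ht.1.1 a hα, if_neg (fun h => hα h.2)]
  have chi_mem : ∀ a ∈ beta k x m,
      (fun b => if a ≤ b ∧ b ∈ beta k x m then (1:ℝ) else 0) ∈ vectorSpan ℝ (Kpoly k x m) := by
    intro a ha
    rw [← tup_sub_tbase ha, vectorSpan_def]
    exact Submodule.subset_span
      (Set.vsub_mem_vsub (tup_mem hchain hm0 hmk ha) (tbase_mem hchain hm0 hmk))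
  have key : ∀ N : ℕ, ∀ a, a ∈ beta k x m → ({b | b ∈ beta k x m ∧ a < b}).ncard ≤ N →
      Pi.single a (1:ℝ) ∈ vectorSpan ℝ (Kpoly k x m) := by
    intro N
    induction N with
    | zero =>
      intro a ha hcard
      have hempty : {b | b ∈ beta k x m ∧ a < b} = ∅ :=
        (Set.ncard_eq_zero (Set.toFinite _)).mp (Nat.le_zero.mp hcard)
      have heq : Pi.single a (1:ℝ) = fun b => if a ≤ b ∧ b ∈ beta k x m then (1:ℝ) else 0 := by
        funext b
        rw [Pi.single_apply]
        by_cases hb : b = a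
        · subst hb
          rw [if_pos rfl, if_pos ⟨le_rfl, ha⟩]
        · rw [if_neg hb, if_neg]
          rintro ⟨hab, hbβ⟩
          have : b ∈ ({b | b ∈ beta k x m ∧ a < b} : Set A) :=
            ⟨hbβ, lt_of_le_of_ne hab (Ne.symm hb)⟩
          rw [hempty] at this
          exact this
      rw [heq]
      exact chi_mem a ha
    | succ N ih =>
      intro a ha hcard
      set U : Finset A := Finset.univ.filter (fun b => b ∈ beta k x m ∧ a < b) with hUdef
      have hUmem : ∀ b, b ∈ U ↔ b ∈ beta k x m ∧ a < b := by
        intro b; simp [hUdef]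
      have hUset : {b | b ∈ beta k x m ∧ a < b} = ↑U := by
        ext b; simp [hUmem]
      have hsum : (fun b => if a ≤ b ∧ b ∈ beta k x m then (1:ℝ) else 0)
          = Pi.single a (1:ℝ) + ∑ b ∈ U, Pi.single b (1:ℝ) := by
        funext c
        rw [Pi.add_apply, Finset.sum_apply]
        have : (∑ b ∈ U, Pi.single b (1:ℝ) c) = if c ∈ U then 1 else 0 := by
          rw [Finset.sum_congr rfl (fun b _ => Pi.single_apply b (1:ℝ) c)]
          exact Finset.sum_ite_eq U c (fun _ => (1:ℝ))
        rw [this, Pi.single_apply]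
        by_cases hc : c = a
        · subst hc
          rw [if_pos ⟨le_rfl, ha⟩, if_pos rfl, if_neg (fun h => lt_irrefl c ((hUmem c).mp h).2)]
          norm_num
        · rw [if_neg hc]
          by_cases hcU : c ∈ U
          · rw [if_pos hcU, if_pos ⟨(((hUmem c).mp hcU).2).le, ((hUmem c).mp hcU).1⟩]
            norm_num
          · rw [if_neg hcU, if_neg]
            · norm_num
            · rintro ⟨hac, hcβ⟩
              exact hcU ((hUmem c).mpr ⟨hcβ, lt_of_le_of_ne hac (Ne.symm hc)⟩)
      have heq : Pi.single a (1:ℝ)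
          = (fun b => if a ≤ b ∧ b ∈ beta k x m then (1:ℝ) else 0) - ∑ b ∈ U, Pi.single b (1:ℝ) := by
        rw [hsum]; abel
      rw [heq]
      refine Submodule.sub_mem _ (chi_mem a ha) (Submodule.sum_mem _ (fun b hb => ?_))
      have hbβ := ((hUmem b).mp hb).1
      have hab := ((hUmem b).mp hb).2
      refine ih b hbβ ?_
      have hss : {c | c ∈ beta k x m ∧ b < c} ⊂ {c | c ∈ beta k x m ∧ a < c} := by
        constructor
        · rintro c ⟨hcβ, hbc⟩
          exact ⟨hcβ, hab.trans hbc⟩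
        · intro hsub
          exact lt_irrefl b (hsub ⟨hbβ, hab⟩).2
      have := Set.ncard_lt_ncard hss (Set.toFinite _)
      omega
  apply le_antisymm
  · rw [vectorSpan_def, Submodule.span_le]
    rintro v ⟨u, hu, w, hw, rfl⟩
    show u -ᵥ w ∈ _
    intro a ha
    rw [vsub_eq_sub, Pi.sub_apply, hval u hu a ha, hval w hw a ha, sub_self]
  · intro f hf
    rw [← Finset.univ_sum_single f]
    refine Submodule.sum_mem _ (fun a _ => ?_)
    by_cases haβ : a ∈ beta k x m
    · have : Pi.single a (f a) = (f a) • (Pi.single a (1:ℝ) : A → ℝ) := by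
        funext b
        rw [Pi.smul_apply, Pi.single_apply, Pi.single_apply, smul_ite, smul_eq_mul, mul_one,
          smul_zero]
      rw [this]
      exact Submodule.smul_mem _ _ (key _ a haβ le_rfl)
    · rw [hf a haβ]
      simp only [Pi.single_zero]
      exact Submodule.zero_mem _

theorem Kpoly_nonempty (hchain : ∀ j j' : ℤ, 1 ≤ j → j < j' → j' ≤ (k : ℤ) → x j < x j')
    (hm0 : 0 ≤ m) (hmk : m ≤ (k : ℤ)) : (Kpoly k x m).Nonempty :=
  ⟨tbase k x m, tbase_mem hchain hm0 hmk⟩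

end KV

section Counting
attribute [local instance 10] Classical.propDecidable
variable [PartialOrder A] {k : ℕ} {x : ℤ → A} {p : ℕ} {j : ℕ → ℤ}

variable (hchain : ∀ j j' : ℤ, 1 ≤ j → j < j' → j' ≤ (k : ℤ) → x j < x j')
  (hk1 : 1 ≤ k) (hj0 : j 0 = -1) (hjtop : j (p + 1) = (k : ℤ) + 1)
  (hmono : ∀ q : ℕ, q ≤ p → j q < j (q + 1))

include hmono in
lemma jmono : ∀ q d : ℕ, q + d ≤ p + 1 → j q + d ≤ j (q + d) := by
  intro q d
  induction d with
  | zero => simp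
  | succ d ih =>
    intro h
    have h1 : j q + d ≤ j (q + d) := ih (by omega)
    have h2 : j (q + d) < j (q + d + 1) := hmono (q + d) (by omega)
    push_cast
    have : q + (d + 1) = (q + d) + 1 := by omega
    rw [this]
    push_cast at h1
    omega

include hj0 hjtop hmono in
lemma jlb {q : ℕ} (hq : q ≤ p + 1) : (q : ℤ) - 1 ≤ j q := by
  have := jmono hmono 0 q (by omega)
  simp only [Nat.zero_add, hj0] at this
  omega

include hj0 hjtop hmono in
lemma jub {q : ℕ} (hq : q ≤ p + 1) : j q ≤ (k : ℤ) + 1 - ((p : ℤ) + 1 - q) := by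
  have := jmono hmono q (p + 1 - q) (by omega)
  rw [show q + (p + 1 - q) = p + 1 by omega, hjtop] at this
  push_cast at this
  omega

include hchain in
lemma xle {r r' : ℤ} (h1 : 1 ≤ r) (h2 : r ≤ r') (h3 : r' ≤ (k : ℤ)) : x r ≤ x r' := by
  rcases eq_or_lt_of_le h2 with rfl | h
  · exact le_rfl
  · exact (hchain r r' h1 h h3).le

include hchain in
lemma x_reflect {r r' : ℤ} (h1 : 1 ≤ r) (h1' : 1 ≤ r') (h3 : r ≤ (k : ℤ)) (h3' : r' ≤ (k : ℤ))
    (h : x r < x r') : r < r' := by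
  by_contra hc
  push_neg at hc
  exact absurd (h.trans_le (xle hchain h1' hc h3)) (lt_irrefl _)

/-- not in `α` iff equal to some chain element -/
lemma not_mem_alpha_iff {a : A} :
    a ∉ alphaSet k x ↔ ∃ r : ℤ, 1 ≤ r ∧ r ≤ (k : ℤ) ∧ a = x r := by
  unfold alphaSet
  simp only [Set.mem_setOf_eq]
  push_neg
  constructor
  · rintro ⟨r, h1, h2, h3⟩; exact ⟨r, h1, h2, h3⟩
  · rintro ⟨r, h1, h2, h3⟩; exact ⟨r, h1, h2, h3⟩

include hchain hj0 hjtop hmono in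
/-- the chain part of `betw q`: if the gap is open, it is the image of `Ioo`. -/
lemma betw_chain_part {q : ℕ} (hq : q ≤ p) :
    betw k x (j q + 1) (j (q + 1)) \ alphaSet k x
      = x '' (Set.Ioo (j q + 1) (j (q + 1))) := by
  have hjq : (-1 : ℤ) ≤ j q := by have := jlb hj0 hjtop hmono (show q ≤ p + 1 by omega); omega
  have hjq1 : j (q + 1) ≤ (k : ℤ) + 1 := by
    have := jub hj0 hjtop hmono (show q + 1 ≤ p + 1 by omega); push_cast at this; omega
  ext a
  constructor
  · rintro ⟨⟨hgt, hlt⟩, hna⟩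
    rw [not_mem_alpha_iff] at hna
    obtain ⟨r, hr1, hr2, rfl⟩ := hna
    refine ⟨r, ⟨?_, ?_⟩, rfl⟩
    · rcases hgt with h | ⟨h1, h2, h3⟩
      · omega
      · exact x_reflect hchain h1 hr1 h2 hr2 h3
    · rcases hlt with h | ⟨h1, h2, h3⟩
      · omega
      · exact x_reflect hchain hr1 h1 hr2 h2 h3
  · rintro ⟨r, ⟨hr1, hr2⟩, rfl⟩
    have hrk : 1 ≤ r ∧ r ≤ (k : ℤ) := by omega
    refine ⟨⟨?_, ?_⟩, ?_⟩
    · by_cases h0 : j q + 1 = 0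
      · exact Or.inl h0
      · exact Or.inr ⟨by omega, by omega, hchain _ _ (by omega) hr1 hrk.2⟩
    · by_cases hk' : j (q + 1) = (k : ℤ) + 1
      · exact Or.inl hk'
      · exact Or.inr ⟨by omega, by omega, hchain _ _ hrk.1 hr2 (by omega)⟩
    · rw [not_mem_alpha_iff]
      exact ⟨r, hrk.1, hrk.2, rfl⟩

include hchain in
lemma not_gtX_ltX {r s : ℤ} {a : A} (hsr : s ≤ r) (h1 : gtX k x r a) (h2 : ltX k x s a) :
    False := by
  rcases h2 with h | ⟨hs1, hs2, hs3⟩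
  · rcases h1 with h' | ⟨hr1, hr2, hr3⟩ <;> omega
  · rcases h1 with h' | ⟨hr1, hr2, hr3⟩
    · omega
    · exact absurd (hr3.trans (hs3.trans_le (xle hchain hs1 hsr hr2))) (lt_irrefl _)

include hchain in
lemma gtX_anti_index {r r' : ℤ} {a : A} (h0 : 0 ≤ r') (hrr : r' ≤ r) (h : gtX k x r a) :
    gtX k x r' a := by
  rcases h with h | ⟨h1, h2, h3⟩
  · exact Or.inl (by omega)
  · rcases eq_or_lt_of_le h0 with h0' | h0'
    · exact Or.inl h0'.symm
    · exact Or.inr ⟨by omega, by omega, (xle hchain (by omega) hrr h2).trans_lt h3⟩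

include hchain in
lemma ltX_mono_index {s s' : ℤ} {a : A} (hss : s ≤ s') (hk' : s' ≤ (k : ℤ) + 1)
    (h : ltX k x s a) : ltX k x s' a := by
  rcases h with h | ⟨h1, h2, h3⟩
  · exact Or.inl (by omega)
  · by_cases hk2 : s' = (k : ℤ) + 1
    · exact Or.inl hk2
    · exact Or.inr ⟨by omega, by omega, h3.trans_le (xle hchain h1 hss (by omega))⟩

include hchain in
lemma x_injOn {r r' : ℤ} (h1 : 1 ≤ r) (h2 : r ≤ (k : ℤ)) (h1' : 1 ≤ r') (h2' : r' ≤ (k : ℤ))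
    (h : x r = x r') : r = r' := by
  by_contra hne
  rcases lt_or_gt_of_ne hne with hlt | hlt
  · exact absurd h (hchain r r' h1 hlt h2').ne
  · exact absurd h.symm (hchain r' r h1' hlt h2).ne

include hchain hj0 hjtop hmono in
/-- cardinality of an open gap, counted in `ᾱ` vs in `α`. -/
lemma betw_card_eq [Fintype A] {q : ℕ} (hq : q ≤ p) (hind : j q + 1 < j (q + 1)) :
    ((betw k x (j q + 1) (j (q + 1))).ncard : ℤ)
      = ((betwA k x (j q + 1) (j (q + 1))).ncard : ℤ) + (j (q + 1) - j q - 2) := by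
  have hjq : (-1 : ℤ) ≤ j q := by have := jlb hj0 hjtop hmono (show q ≤ p + 1 by omega); omega
  have hjq1 : j (q + 1) ≤ (k : ℤ) + 1 := by
    have := jub hj0 hjtop hmono (show q + 1 ≤ p + 1 by omega); push_cast at this; omega
  have hsplit : betw k x (j q + 1) (j (q + 1))
      = betwA k x (j q + 1) (j (q + 1)) ∪ (betw k x (j q + 1) (j (q + 1)) \ alphaSet k x) := by
    ext a
    constructor
    · intro ha
      by_cases hα : a ∈ alphaSet k x
      · exact Or.inl ⟨hα, ha.1, ha.2⟩
      · exact Or.inr ⟨ha, hα⟩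
    · rintro (ha | ha)
      · exact ⟨ha.2.1, ha.2.2⟩
      · exact ha.1
  have hdisj : Disjoint (betwA k x (j q + 1) (j (q + 1)))
      (betw k x (j q + 1) (j (q + 1)) \ alphaSet k x) := by
    rw [Set.disjoint_left]
    rintro a ha hb
    exact hb.2 ha.1
  rw [hsplit, Set.ncard_union_eq hdisj (Set.toFinite _) (Set.toFinite _),
    betw_chain_part hchain hj0 hjtop hmono hq]
  have hinj : Set.InjOn x (Set.Ioo (j q + 1) (j (q + 1))) := by
    rintro r ⟨hr1, hr2⟩ r' ⟨hr1', hr2'⟩ h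
    exact x_injOn hchain (by omega) (by omega) (by omega) (by omega) h
  rw [Set.ncard_image_of_injOn hinj, ← Finset.coe_Ioo, Set.ncard_coe_finset, Int.card_Ioo]
  push_cast
  omega

include hchain in
/-- an empty gap contributes nothing. -/
lemma betw_empty {r s : ℤ} (hsr : s ≤ r) : betw k x r s = (∅ : Set A) := by
  ext a
  simp only [Set.mem_empty_iff_false, iff_false]
  rintro ⟨h1, h2⟩
  exact not_gtX_ltX hchain hsr h1 h2

include hchain hmono in
lemma gap_pairwise_disjoint {q q' : ℕ} (hqq : q < q') (hq' : q' ≤ p) :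
    Disjoint (betw k x (j q + 1) (j (q + 1))) (betw k x (j q' + 1) (j (q' + 1))) := by
  rw [Set.disjoint_left]
  rintro a ⟨h1, h2⟩ ⟨h1', h2'⟩
  have hle : j (q + 1) ≤ j q' + 1 := by
    have := jmono hmono (q + 1) (q' - (q + 1)) (by omega)
    rw [show q + 1 + (q' - (q + 1)) = q' by omega] at this
    omega
  exact not_gtX_ltX hchain hle h1' h2

include hchain hj0 hjtop hmono in
lemma gap_subset_compl {q : ℕ} (hq : q ≤ p) {a : A}
    (ha : a ∈ betw k x (j q + 1) (j (q + 1))) {q' : ℕ} (hq1 : 1 ≤ q') (hq2 : q' ≤ p) :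
    a ∉ beta k x (j q') := by
  rintro ⟨-, -, hnlt, hngt⟩
  rcases le_or_gt q' q with hle | hlt
  · refine hngt (gtX_anti_index hchain ?_ ?_ ha.1)
    · have := jlb hj0 hjtop hmono (show q' ≤ p + 1 by omega); omega
    · have := jmono hmono q' (q - q') (by omega)
      rw [show q' + (q - q') = q by omega] at this
      omega
  · refine hnlt (ltX_mono_index hchain ?_ ?_ ha.2)
    · have := jmono hmono (q + 1) (q' - (q + 1)) (by omega)
      rw [show q + 1 + (q' - (q + 1)) = q' by omega] at this
      omega
    · have := jub hj0 hjtop hmono (show q' ≤ p + 1 by omega); push_cast at this; omega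

include hchain hj0 hjtop hmono in
lemma gap_cover (hp : 1 ≤ p) {a : A} (ha : a ∈ alphaSet k x)
    (hna : a ∉ ⋃ q ∈ Finset.Icc 1 p, beta k x (j q)) :
    ∃ q : ℕ, q ≤ p ∧ a ∈ betw k x (j q + 1) (j (q + 1)) := by
  classical
  set Q : Finset ℕ := (Finset.range (p + 1)).filter (fun q => gtX k x (j q + 1) a) with hQ
  have h0Q : 0 ∈ Q := by
    simp only [hQ, Finset.mem_filter, Finset.mem_range]
    exact ⟨by omega, Or.inl (by rw [hj0]; ring)⟩
  have hQne : Q.Nonempty := ⟨0, h0Q⟩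
  obtain ⟨q, hqQ, hqmax⟩ : ∃ q, q ∈ Q ∧ ∀ b ∈ Q, b ≤ q :=
    ⟨Q.max' hQne, Q.max'_mem hQne, fun b hb => Q.le_max' b hb⟩
  have hqp : q ≤ p := by
    have := (Finset.mem_filter.mp hqQ).1
    rw [Finset.mem_range] at this
    omega
  have hgt : gtX k x (j q + 1) a := (Finset.mem_filter.mp hqQ).2
  refine ⟨q, hqp, hgt, ?_⟩
  rcases eq_or_lt_of_le hqp with rfl | hqlt
  · exact Or.inl (by rw [hjtop])
  · have hq1p : q + 1 ≤ p := by omega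
    have hnb : a ∉ beta k x (j (q + 1)) := by
      intro hb
      exact hna (Set.mem_biUnion (Finset.mem_Icc.mpr ⟨by omega, hq1p⟩) hb)
    have hbnds : 0 ≤ j (q + 1) ∧ j (q + 1) ≤ (k : ℤ) := by
      constructor
      · have := jlb hj0 hjtop hmono (show q + 1 ≤ p + 1 by omega); push_cast at this; omega
      · have := jub hj0 hjtop hmono (show q + 1 ≤ p + 1 by omega); push_cast at this; omega
    by_contra hnlt
    have hgt' : gtX k x (j (q + 1) + 1) a := by
      by_contra hngt
      exact hnb ⟨hbnds, ha, hnlt, hngt⟩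
    have : q + 1 ∈ Q := by
      simp only [hQ, Finset.mem_filter, Finset.mem_range]
      exact ⟨by omega, hgt'⟩
    have := hqmax _ this
    omega

include hchain hk1 in
lemma alpha_ncard [Fintype A] {n : ℕ} (hkn : k ≤ n) (hcard : Fintype.card A = n) :
    ((alphaSet k x).ncard : ℤ) = (n : ℤ) - (k : ℤ) := by
  have hcompl : (alphaSet k x)ᶜ = x '' (Set.Icc (1 : ℤ) (k : ℤ)) := by
    ext a
    simp only [Set.mem_compl_iff, Set.mem_image, Set.mem_Icc]
    rw [not_mem_alpha_iff]
    constructor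
    · rintro ⟨r, h1, h2, h3⟩; exact ⟨r, ⟨h1, h2⟩, h3.symm⟩
    · rintro ⟨r, ⟨h1, h2⟩, h3⟩; exact ⟨r, h1, h2, h3.symm⟩
  have hinj : Set.InjOn x (Set.Icc (1 : ℤ) (k : ℤ)) := by
    rintro r ⟨hr1, hr2⟩ r' ⟨hr1', hr2'⟩ h
    exact x_injOn hchain hr1 hr2 hr1' hr2' h
  have h1 : (alphaSet k x).ncard + ((alphaSet k x)ᶜ).ncard = Nat.card A :=
    Set.ncard_add_ncard_compl _
  rw [hcompl, Set.ncard_image_of_injOn hinj, ← Finset.coe_Icc, Set.ncard_coe_finset,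
    Int.card_Icc, Nat.card_eq_fintype_card, hcard] at h1
  have : ((k : ℤ) + 1 - 1).toNat = k := by omega
  rw [this] at h1
  omega

include hchain hj0 hjtop hmono in
/-- the partition of `α` into `S` and the gaps. -/
lemma partition_card [Fintype A] (hp : 1 ≤ p) :
    ((alphaSet k x).ncard : ℤ)
      = (((⋃ q ∈ Finset.Icc 1 p, beta k x (j q)).ncard : ℤ))
        + ∑ q ∈ Finset.range (p + 1), ((betwA k x (j q + 1) (j (q + 1))).ncard : ℤ) := by
  classical
  set S : Set A := ⋃ q ∈ Finset.Icc 1 p, beta k x (j q) with hS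
  have hSsub : S ⊆ alphaSet k x := by
    intro a ha
    rw [hS, Set.mem_iUnion₂] at ha
    obtain ⟨q, hq, haq⟩ := ha
    exact haq.2.1
  have hdiff : alphaSet k x \ S = ⋃ q ∈ Finset.range (p + 1), betwA k x (j q + 1) (j (q + 1)) := by
    ext a
    constructor
    · rintro ⟨hα, hnS⟩
      obtain ⟨q, hq, haq⟩ := gap_cover hchain hj0 hjtop hmono hp hα hnS
      exact Set.mem_biUnion (Finset.mem_range.mpr (by omega)) ⟨hα, haq⟩
    · intro ha
      rw [Set.mem_iUnion₂] at ha
      obtain ⟨q, hq, hα, haq⟩ := ha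
      rw [Finset.mem_range] at hq
      refine ⟨hα, fun hmem => ?_⟩
      rw [hS, Set.mem_iUnion₂] at hmem
      obtain ⟨q', hq', hbq⟩ := hmem
      rw [Finset.mem_Icc] at hq'
      exact gap_subset_compl hchain hj0 hjtop hmono (by omega) haq hq'.1 hq'.2 hbq
  have hsum : ((alphaSet k x \ S).ncard : ℤ)
      = ∑ q ∈ Finset.range (p + 1), ((betwA k x (j q + 1) (j (q + 1))).ncard : ℤ) := by
    rw [hdiff]
    have hdisjF : ∀ q ∈ Finset.range (p + 1), ∀ q' ∈ Finset.range (p + 1), q ≠ q' →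
        Disjoint ((betwA k x (j q + 1) (j (q + 1))).toFinset)
          ((betwA k x (j q' + 1) (j (q' + 1))).toFinset) := by
      intro q hq q' hq' hne
      rw [Finset.mem_range] at hq hq'
      have key : ∀ u v : ℕ, u < v → v ≤ p →
          Disjoint ((betwA k x (j u + 1) (j (u + 1))).toFinset)
            ((betwA k x (j v + 1) (j (v + 1))).toFinset) := by
        intro u v huv hv
        rw [Finset.disjoint_left]
        intro a ha hb
        rw [Set.mem_toFinset] at ha hb
        exact (Set.disjoint_left.mp (gap_pairwise_disjoint hchain hmono huv hv))
          ⟨ha.2.1, ha.2.2⟩ ⟨hb.2.1, hb.2.2⟩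
      rcases lt_or_gt_of_ne hne with h | h
      · exact key q q' h (by omega)
      · exact (key q' q h (by omega)).symm
    have hcardU := Finset.card_biUnion hdisjF
    have hU : (⋃ q ∈ Finset.range (p + 1), betwA k x (j q + 1) (j (q + 1))).toFinset
        = (Finset.range (p + 1)).biUnion
          (fun q => (betwA k x (j q + 1) (j (q + 1))).toFinset) := by
      ext a
      simp only [Set.mem_toFinset, Set.mem_iUnion₂, Finset.mem_biUnion]
      constructor
      · rintro ⟨q, hq, haq⟩; exact ⟨q, hq, haq⟩
      · rintro ⟨q, hq, haq⟩; exact ⟨q, hq, haq⟩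
    rw [Set.ncard_eq_toFinset_card']
    trans ((((Finset.range (p + 1)).biUnion
      (fun q => (betwA k x (j q + 1) (j (q + 1))).toFinset)).card : ℕ) : ℤ)
    · congr 1
      convert congrArg Finset.card hU
    rw [hcardU]
    push_cast
    refine Finset.sum_congr rfl (fun q _ => ?_)
    rw [Set.ncard_eq_toFinset_card']
  have := Set.ncard_diff_add_ncard_of_subset hSsub (Set.toFinite _)
  push_cast [← this]
  omega

/-- the telescoping identity for the positions. -/
lemma telescope (i : ℤ → ℤ) (m : ℕ) :
    (∑ q ∈ Finset.range (m + 1), (i (j (q + 1)) - i (j q + 1)))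
      + (∑ q ∈ Finset.Icc 1 m, (i (j q + 1) - i (j q)))
      = i (j (m + 1)) - i (j 0 + 1) := by
  induction m with
  | zero => simp
  | succ m ih =>
    rw [Finset.sum_range_succ, Finset.sum_Icc_succ_top (by omega : 1 ≤ m + 1)]
    omega

include hchain hk1 hj0 hjtop hmono in
/-- the master counting identity. -/
lemma big_identity [Fintype A] {n : ℕ} {i : ℤ → ℤ} {ℓ : ℤ} (hp : 1 ≤ p)
    (hkn : k ≤ n) (hcard : Fintype.card A = n) (hi0 : i 0 = 0)
    (hitop : i ((k : ℤ) + 1) = (n : ℤ) + 1) :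
    (∑ q ∈ Finset.range (p + 1),
        if j q + 1 < j (q + 1) then ((betw k x (j q + 1) (j (q + 1))).ncard : ℤ) else 0)
      + (((⋃ q ∈ Finset.Icc 1 p, beta k x (j q)).ncard : ℤ))
    = (∑ q ∈ Finset.Icc 1 p,
        (i (j q + 1) - i (j q) - 1 - (if j q = ℓ - 1 ∨ j q = ℓ then 1 else 0)))
      + (((Finset.Icc 1 p).filter fun q => j q = ℓ - 1 ∨ j q = ℓ).card : ℤ)
      + ∑ q ∈ Finset.range (p + 1),
          (if j q + 1 < j (q + 1) then i (j (q + 1)) - i (j q + 1) - 1 else 0) := by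
  classical
  -- abbreviations
  set G : ℤ := ∑ q ∈ Finset.range (p + 1), ((betwA k x (j q + 1) (j (q + 1))).ncard : ℤ)
    with hG
  set Nind : ℤ := ∑ q ∈ Finset.range (p + 1), (if j q + 1 < j (q + 1) then (1 : ℤ) else 0)
    with hNind
  set T1 : ℤ := ∑ q ∈ Finset.range (p + 1), (i (j (q + 1)) - i (j q + 1)) with hT1
  set D : ℤ := ∑ q ∈ Finset.Icc 1 p, (i (j q + 1) - i (j q)) with hD
  set L : ℤ := ∑ q ∈ Finset.Icc 1 p, (if j q = ℓ - 1 ∨ j q = ℓ then (1 : ℤ) else 0) with hL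
  -- per-q identity for the betw sum
  have hBper : ∀ q ∈ Finset.range (p + 1),
      (if j q + 1 < j (q + 1) then ((betw k x (j q + 1) (j (q + 1))).ncard : ℤ) else 0)
        = ((betwA k x (j q + 1) (j (q + 1))).ncard : ℤ) + (j (q + 1) - j q) - 1
          - (if j q + 1 < j (q + 1) then (1 : ℤ) else 0) := by
    intro q hq
    rw [Finset.mem_range] at hq
    by_cases hind : j q + 1 < j (q + 1)
    · rw [if_pos hind, if_pos hind, betw_card_eq hchain hj0 hjtop hmono (by omega) hind]
      ring
    · have hstep : j (q + 1) = j q + 1 := by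
        have := hmono q (by omega); omega
      have hempty : betwA k x (j q + 1) (j (q + 1)) = (∅ : Set A) := by
        ext a
        simp only [Set.mem_empty_iff_false, iff_false]
        rintro ⟨-, h1, h2⟩
        exact not_gtX_ltX hchain (by omega) h1 h2
      rw [if_neg hind, if_neg hind, hempty]
      simp [hstep]
  have hB : (∑ q ∈ Finset.range (p + 1),
      if j q + 1 < j (q + 1) then ((betw k x (j q + 1) (j (q + 1))).ncard : ℤ) else 0)
        = G + ((k : ℤ) + 2) - ((p : ℤ) + 1) - Nind := by
    rw [Finset.sum_congr rfl hBper]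
    rw [Finset.sum_sub_distrib, Finset.sum_sub_distrib, Finset.sum_add_distrib,
      Finset.sum_range_sub (fun q => j q), hj0, hjtop]
    simp only [Finset.sum_const, Finset.card_range, nsmul_eq_mul, mul_one]
    push_cast
    ring
  -- per-q identity for the i-difference sum
  have hIper : ∀ q ∈ Finset.range (p + 1),
      (if j q + 1 < j (q + 1) then i (j (q + 1)) - i (j q + 1) - 1 else 0)
        = (i (j (q + 1)) - i (j q + 1)) - (if j q + 1 < j (q + 1) then (1 : ℤ) else 0) := by
    intro q hq
    rw [Finset.mem_range] at hq
    by_cases hind : j q + 1 < j (q + 1)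
    · rw [if_pos hind, if_pos hind]
    · have hstep : j (q + 1) = j q + 1 := by
        have := hmono q (by omega); omega
      rw [if_neg hind, if_neg hind, hstep]
      ring
  have hI : (∑ q ∈ Finset.range (p + 1),
      (if j q + 1 < j (q + 1) then i (j (q + 1)) - i (j q + 1) - 1 else 0)) = T1 - Nind := by
    rw [Finset.sum_congr rfl hIper, Finset.sum_sub_distrib]
  -- the κmax sum
  have hKm : (∑ q ∈ Finset.Icc 1 p,
      (i (j q + 1) - i (j q) - 1 - (if j q = ℓ - 1 ∨ j q = ℓ then 1 else 0)))
        = D - (p : ℤ) - L := by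
    rw [Finset.sum_sub_distrib, Finset.sum_sub_distrib]
    simp only [Finset.sum_const, Nat.card_Icc, nsmul_eq_mul, mul_one]
    push_cast
    ring
  -- the filter cardinality
  have hLcard : ((((Finset.Icc 1 p).filter fun q => j q = ℓ - 1 ∨ j q = ℓ).card : ℕ) : ℤ)
      = L := by
    rw [Finset.card_filter]
    push_cast
    rfl
  -- the partition
  have hpart := partition_card hchain hj0 hjtop hmono hp (A := A)
  have halpha := alpha_ncard hchain hk1 hkn hcard
  -- the telescope
  have htel := telescope (j := j) i p
  rw [hj0, hjtop] at htel
  have : i (-1 + 1) = 0 := by rw [show (-1 : ℤ) + 1 = 0 by ring, hi0]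
  rw [this, hitop] at htel
  rw [hB, hI, hKm, hLcard]
  rw [halpha] at hpart
  omega

end Counting


/-- **Equivalence of geometric and combinatorial criticality** (Proposition 5.5).
For every `c ≥ 0`, the dimension condition (1) holds if and only if the combinatorial
condition (2) holds. -/
theorem criticality_equivalence
    {A : Type*} [PartialOrder A] [Fintype A]
    (n k : ℕ) (x : ℤ → A) (i : ℤ → ℤ) (ℓ : ℤ)
    (hsetup : Setup n k x i ℓ) (c : ℕ) :
    DimCond k x i ℓ c ↔ CritCond k x i ℓ (c : ℤ) := by
  classical
  obtain ⟨hk1, hkn, hcard, hchain, hi0, hitop, himono, hi1, hik, hl1, hlk, hgap1, hgap2⟩ :=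
    hsetup
  have hdim : ∀ p : ℕ, 1 ≤ p → ∀ j : ℕ → ℤ, j 0 = -1 → j (p + 1) = (k : ℤ) + 1 →
      (∀ q : ℕ, q ≤ p → j q < j (q + 1)) → ∀ κ : ℕ → ℕ,
      (∀ q : ℕ, 1 ≤ q → q ≤ p → 1 ≤ κ q) →
      ((Module.finrank ℝ ↥(vectorSpan ℝ
          (∑ q ∈ Finset.Icc 1 p, ∑ _m ∈ Finset.range (κ q), Kpoly k x (j q)))) : ℤ)
        = ((⋃ q ∈ Finset.Icc 1 p, beta k x (j q)).ncard : ℤ) := by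
    intro p hp j hj0 hjtop hmono κ hκ
    have hbnd : ∀ q, q ∈ Finset.Icc 1 p → 0 ≤ j q ∧ j q ≤ (k : ℤ) := by
      intro q hq
      rw [Finset.mem_Icc] at hq
      constructor
      · have := jlb hj0 hjtop hmono (q := q) (by omega)
        omega
      · have := jub hj0 hjtop hmono (q := q) (by omega)
        push_cast at this
        omega
    have hne : ∀ q ∈ Finset.Icc 1 p, (∑ _m ∈ Finset.range (κ q), Kpoly k x (j q)).Nonempty := by
      intro q hq
      exact sum_nonempty' _ _ (fun m _ => Kpoly_nonempty hchain (hbnd q hq).1 (hbnd q hq).2)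
    rw [vectorSpan_finsum' _ _ hne]
    have h2 : ∀ q, ∀ hq : q ∈ Finset.Icc 1 p,
        vectorSpan ℝ (∑ _m ∈ Finset.range (κ q), Kpoly k x (j q))
          = suppSub (beta k x (j q)) := by
      intro q hq
      rw [vectorSpan_finsum' _ _
        (fun m _ => Kpoly_nonempty hchain (hbnd q hq).1 (hbnd q hq).2)]
      have hκq : (Finset.range (κ q)).Nonempty := by
        rw [Finset.nonempty_range_iff]
        have := hκ q (Finset.mem_Icc.mp hq).1 (Finset.mem_Icc.mp hq).2
        omega
      apply le_antisymm
      · exact iSup_le fun m => iSup_le fun _ =>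
          (vectorSpan_Kpoly hchain (hbnd q hq).1 (hbnd q hq).2).le
      · obtain ⟨m0, hm0⟩ := hκq
        rw [← vectorSpan_Kpoly hchain (hbnd q hq).1 (hbnd q hq).2]
        exact le_iSup₂ (f := fun m (_ : m ∈ Finset.range (κ q)) =>
          vectorSpan ℝ (Kpoly k x (j q))) m0 hm0
    have hcongr : (⨆ q ∈ Finset.Icc 1 p,
        vectorSpan ℝ (∑ _m ∈ Finset.range (κ q), Kpoly k x (j q)))
          = ⨆ q ∈ Finset.Icc 1 p, suppSub (beta k x (j q)) :=
      iSup_congr fun q => iSup_congr fun hq => h2 q hq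
    rw [hcongr, suppSub_iSup, finrank_suppSub]
  constructor
  · intro hD p hp j hj0 hjtop hmono hpos
    set κ : ℕ → ℕ := fun q =>
      (i (j q + 1) - i (j q) - 1 - (if j q = ℓ - 1 ∨ j q = ℓ then 1 else 0)).toNat with hκdef
    have hκb : ∀ q : ℕ, 1 ≤ q → q ≤ p → 1 ≤ κ q ∧
        (κ q : ℤ) ≤ i (j q + 1) - i (j q) - 1
          - (if j q = ℓ - 1 ∨ j q = ℓ then 1 else 0) := by
      intro q h1 h2
      have := hpos q h1 h2
      constructor
      · simp only [hκdef]
        omega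
      · simp only [hκdef]
        omega
    have hineq := hD p hp j hj0 hjtop hmono hpos κ (fun q h1 h2 => hκb q h1 h2)
    rw [hdim p hp j hj0 hjtop hmono κ (fun q h1 h2 => (hκb q h1 h2).1)] at hineq
    have hsum : ((∑ q ∈ Finset.Icc 1 p, κ q : ℕ) : ℤ)
        = ∑ q ∈ Finset.Icc 1 p,
            (i (j q + 1) - i (j q) - 1 - (if j q = ℓ - 1 ∨ j q = ℓ then 1 else 0)) := by
      push_cast
      refine Finset.sum_congr rfl (fun q hq => ?_)
      rw [Finset.mem_Icc] at hq
      have := hpos q hq.1 hq.2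
      simp only [hκdef]
      omega
    have hbig := big_identity hchain hk1 hj0 hjtop hmono (ℓ := ℓ) (i := i) hp hkn hcard hi0 hitop
    omega
  · intro hC p hp j hj0 hjtop hmono hpos κ hκ
    rw [hdim p hp j hj0 hjtop hmono κ (fun q h1 h2 => (hκ q h1 h2).1)]
    have hineq := hC p hp j hj0 hjtop hmono hpos
    have hbig := big_identity hchain hk1 hj0 hjtop hmono (ℓ := ℓ) (i := i) hp hkn hcard hi0 hitop
    have hsum : ((∑ q ∈ Finset.Icc 1 p, κ q : ℕ) : ℤ)
        ≤ ∑ q ∈ Finset.Icc 1 p,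
            (i (j q + 1) - i (j q) - 1 - (if j q = ℓ - 1 ∨ j q = ℓ then 1 else 0)) := by
      push_cast
      exact Finset.sum_le_sum
        (fun q hq => (hκ q (Finset.mem_Icc.mp hq).1 (Finset.mem_Icc.mp hq).2).2)
    omega


end Stanley
end

section
/- (Strengthened bound for splitting pairs.) Assume |N₌|² = |N₋|·|N₊| and |N₌| > 0. Then for every splitting pair (r,s): |ᾱ_{>x_{r+1},<x_s}| ≤ i_s − i_{r+1} − 1 − [r+1 = ℓ] − [s = ℓ], where [·] is the 0/1 indicator. -/
open Pointwise

namespace Stanley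

variable {A : Type*}

/-- Counting lemma: an injective map sending `S` into the integer open interval
`(L, U)` bounds `|S|` by `U - L - 1`. -/
private lemma count_aux {A : Type*} (S : Set A) (hS : S.Finite) (σ : A → ℤ)
    (hσ : Function.Injective σ) (L U : ℤ) (hLU : L < U)
    (h : ∀ w ∈ S, L < σ w ∧ σ w < U) : (S.ncard : ℤ) ≤ U - L - 1 := by
  have himg : σ '' S ⊆ Set.Ioo L U := by
    rintro _ ⟨w, hw, rfl⟩
    exact ⟨(h w hw).1, (h w hw).2⟩
  have h1 : S.ncard = (σ '' S).ncard := (Set.ncard_image_of_injective S hσ).symm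
  have h2 : (σ '' S).ncard ≤ (Set.Ioo L U).ncard :=
    Set.ncard_le_ncard himg (Set.finite_Ioo L U)
  have h3 : (Set.Ioo L U).ncard = (U - L - 1).toNat := by
    rw [← Finset.coe_Ioo, Set.ncard_coe_finset, Int.card_Ioo]
  omega

/-- Monotonicity of `i` over the full range `{0,…,k+1}`. -/
private lemma imono {A : Type*} [PartialOrder A] [Fintype A] {n k : ℕ} {x : ℤ → A}
    {i : ℤ → ℤ} {ℓ : ℤ} (hs : Setup n k x i ℓ) :
    ∀ a b : ℤ, 0 ≤ a → a < b → b ≤ (k : ℤ) + 1 → i a < i b := by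
  intro a b ha hab hb
  have hkn : (k : ℤ) ≤ (n : ℤ) := by exact_mod_cast hs.hkn
  have hle : ∀ c d : ℤ, 1 ≤ c → c ≤ d → d ≤ (k : ℤ) → i c ≤ i d := by
    intro c d hc hcd hd
    rcases eq_or_lt_of_le hcd with rfl | h
    · exact le_rfl
    · exact le_of_lt (hs.himono c d hc h hd)
  rcases eq_or_lt_of_le ha with rfl | ha1
  · rw [hs.hi0]
    rcases eq_or_lt_of_le hb with rfl | hb1
    · rw [hs.hitop]; omega
    · have := hle 1 b le_rfl (by omega) (by omega)
      have := hs.hi1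
      omega
  · rcases eq_or_lt_of_le hb with rfl | hb1
    · rw [hs.hitop]
      have := hle a (k : ℤ) (by omega) (by omega) le_rfl
      have := hs.hik
      omega
    · exact hs.himono a b (by omega) hab (by omega)

/-- Non-strict version of `imono`. -/
private lemma imono' {A : Type*} [PartialOrder A] [Fintype A] {n k : ℕ} {x : ℤ → A}
    {i : ℤ → ℤ} {ℓ : ℤ} (hs : Setup n k x i ℓ) :
    ∀ a b : ℤ, 0 ≤ a → a ≤ b → b ≤ (k : ℤ) + 1 → i a ≤ i b := by
  intro a b ha hab hb
  rcases eq_or_lt_of_le hab with rfl | h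
  · exact le_rfl
  · exact le_of_lt (imono hs a b ha h hb)

/-- Core estimate: a single linear extension in `N_∘` yields the bound. -/
private lemma betw_bound_aux {A : Type*} [PartialOrder A] [Fintype A]
    {n k : ℕ} {x : ℤ → A} {i : ℤ → ℤ} {ℓ : ℤ} (hsetup : Setup n k x i ℓ)
    {e : ℤ} {σ : A → ℤ} (hσ : σ ∈ N n k x i ℓ e)
    (r s L U : ℤ) (hLU : L < U)
    (hLval : (r + 1 = 0 ∧ L ≤ 0) ∨ (1 ≤ r + 1 ∧ r + 1 ≤ (k : ℤ) ∧ σ (x (r + 1)) = L))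
    (hUval : (s = (k : ℤ) + 1 ∧ (n : ℤ) < U) ∨ (1 ≤ s ∧ s ≤ (k : ℤ) ∧ σ (x s) = U)) :
    ((betw k x (r + 1) s).ncard : ℤ) ≤ U - L - 1 := by
  obtain ⟨⟨hinj, hbound, hmono⟩, hfix, hℓ⟩ := hσ
  refine count_aux _ (Set.toFinite _) σ hinj L U hLU ?_
  intro w hw
  obtain ⟨hg, hl⟩ := hw
  constructor
  · rcases hLval with ⟨hr0, hL0⟩ | ⟨hr1, hrk, hLσ⟩
    · have := (hbound w).1; omega
    · rcases hg with hr0' | ⟨_, _, hxw⟩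
      · omega
      · have h2 : σ (x (r + 1)) ≤ σ w := hmono _ _ (le_of_lt hxw)
        have h3 : σ (x (r + 1)) ≠ σ w := fun hcon => (ne_of_lt hxw) (hinj hcon)
        omega
  · rcases hUval with ⟨hsk, hU0⟩ | ⟨hs1, hsk, hUσ⟩
    · have := (hbound w).2; omega
    · rcases hl with hs0' | ⟨_, _, hwx⟩
      · omega
      · have h2 : σ w ≤ σ (x s) := hmono _ _ (le_of_lt hwx)
        have h3 : σ w ≠ σ (x s) := fun hcon => (ne_of_lt hwx) (hinj hcon)
        omega

/-- **Strengthened bound for splitting pairs** (Lemma 6.2). Assuming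
`|N₌|² = |N₋|·|N₊|` and `|N₌| > 0`, every splitting pair `(r,s)` satisfies
`|ᾱ_{>x_{r+1},<x_s}| ≤ i_s - i_{r+1} - 1 - [r+1 = ℓ] - [s = ℓ]`. -/
theorem splitting_pair_bound
    {A : Type*} [PartialOrder A] [Fintype A]
    (n k : ℕ) (x : ℤ → A) (i : ℤ → ℤ) (ℓ : ℤ)
    (hsetup : Setup n k x i ℓ)
    (heq : (N n k x i ℓ 0).ncard ^ 2 = (N n k x i ℓ (-1)).ncard * (N n k x i ℓ 1).ncard)
    (hpos : 0 < (N n k x i ℓ 0).ncard) :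
    ∀ r s : ℤ, SplitPair k r s →
      ((betw k x (r + 1) s).ncard : ℤ) ≤
        i s - i (r + 1) - 1 - (if r + 1 = ℓ then 1 else 0) - (if s = ℓ then 1 else 0) := by
  intro r s hsp
  obtain ⟨h0, hrs, hsk, hne⟩ := hsp
  have hl1 := hsetup.hl1
  have hlk := hsetup.hlk
  have hkn : (k : ℤ) ≤ (n : ℤ) := by exact_mod_cast hsetup.hkn
  have hprod : 0 < (N n k x i ℓ (-1)).ncard * (N n k x i ℓ 1).ncard := by
    rw [← heq]; exact pow_pos hpos 2
  have hmne : (N n k x i ℓ (-1)).Nonempty :=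
    Set.nonempty_of_ncard_ne_zero (by intro h; rw [h] at hprod; simp at hprod)
  have hpne : (N n k x i ℓ 1).Nonempty :=
    Set.nonempty_of_ncard_ne_zero (by intro h; rw [h] at hprod; simp at hprod)
  have h0ne : (N n k x i ℓ 0).Nonempty :=
    Set.nonempty_of_ncard_ne_zero (by omega)
  by_cases h1 : r + 1 = ℓ
  · -- use a linear extension in `N₊`
    obtain ⟨σ, hσ⟩ := hpne
    obtain ⟨hle, hfix, hxl⟩ := hσ
    have hsl : s ≠ ℓ := by omega
    have hLU : i (r + 1) + 1 < i s := by
      have h2 : i (ℓ + 1) ≤ i s := imono' hsetup (ℓ + 1) s (by omega) (by omega) hsk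
      have h3 := hsetup.hgap2
      rw [h1]; omega
    have key := betw_bound_aux hsetup ⟨hle, hfix, hxl⟩ r s (i (r + 1) + 1) (i s) hLU ?_ ?_
    · rw [if_pos h1, if_neg hsl]; omega
    · right
      refine ⟨by omega, by omega, ?_⟩
      rw [h1, hxl]
    · by_cases hck : s = (k : ℤ) + 1
      · exact Or.inl ⟨hck, by rw [hck, hsetup.hitop]; omega⟩
      · exact Or.inr ⟨by omega, by omega, hfix s (by omega) (by omega) hsl⟩
  · by_cases h2 : s = ℓ
    · -- use a linear extension in `N₋`
      obtain ⟨σ, hσ⟩ := hmne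
      obtain ⟨hle, hfix, hxl⟩ := hσ
      have hLU : i (r + 1) < i ℓ - 1 := by
        have h3 : i (r + 1) ≤ i (ℓ - 1) := imono' hsetup (r + 1) (ℓ - 1) h0 (by omega) (by omega)
        have h4 := hsetup.hgap1
        omega
      have key := betw_bound_aux hsetup ⟨hle, hfix, hxl⟩ r s (i (r + 1)) (i ℓ - 1) hLU ?_ ?_
      · rw [h2] at key ⊢; rw [if_neg h1, if_pos rfl]; omega
      · by_cases hr0 : r + 1 = 0
        · exact Or.inl ⟨hr0, by rw [hr0, hsetup.hi0]⟩
        · exact Or.inr ⟨by omega, by omega, hfix (r + 1) (by omega) (by omega) h1⟩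
      · right
        refine ⟨by omega, by omega, ?_⟩
        rw [h2, hxl]; ring
    · -- use a linear extension in `N₌`
      obtain ⟨σ, hσ⟩ := h0ne
      obtain ⟨hle, hfix, hxl⟩ := hσ
      have hLU : i (r + 1) < i s := imono hsetup (r + 1) s h0 hrs hsk
      have key := betw_bound_aux hsetup ⟨hle, hfix, hxl⟩ r s (i (r + 1)) (i s) hLU ?_ ?_
      · rw [if_neg h1, if_neg h2]; omega
      · by_cases hr0 : r + 1 = 0
        · exact Or.inl ⟨hr0, by rw [hr0, hsetup.hi0]⟩
        · exact Or.inr ⟨by omega, by omega, hfix (r + 1) (by omega) (by omega) h1⟩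
      · by_cases hck : s = (k : ℤ) + 1
        · exact Or.inl ⟨hck, by rw [hck, hsetup.hitop]; omega⟩
        · exact Or.inr ⟨by omega, by omega, hfix s (by omega) (by omega) h2⟩

end Stanley
end

section
/- (Interval coverage by β_j.) (a) For every σ ∈ N₌ and every j ∈ {0,…,k}: {i_j+1, i_j+2, …, i_{j+1}−1} ⊆ σ(β_j); consequently, for every S ⊆ {0,…,k}: ∪_{j∈S} {i_j+1,…,i_{j+1}−1} ⊆ σ(β_S). (b) For every ∘ ∈ {−,+}, every j ∈ {0,…,k} \ {ℓ−1, ℓ}, and every σ ∈ N_∘: {i_j+1,…,i_{j+1}−1} ⊆ σ(β_j); consequently, for every S ⊆ {0,…,k} \ {ℓ−1,ℓ}: ∪_{j∈S} {i_j+1,…,i_{j+1}−1} ⊆ σ(β_S). -/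
open Pointwise

namespace Stanley

variable {A : Type*}

section Aux

variable [PartialOrder A] [Fintype A] {n k : ℕ} {x : ℤ → A} {i : ℤ → ℤ} {ℓ : ℤ}

/-- Strict monotonicity of `i` on `{0,…,k+1}`. -/
private lemma i_smono (hs : Setup n k x i ℓ) {j j' : ℤ} (h0 : 0 ≤ j) (hjj : j < j')
    (hk : j' ≤ (k : ℤ) + 1) : i j < i j' := by
  have hj'1 : 1 ≤ j' := by omega
  have hipos : ∀ m : ℤ, 1 ≤ m → m ≤ (k : ℤ) → 1 ≤ i m := by
    intro m h1 h2
    rcases eq_or_lt_of_le h1 with h | h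
    · rw [← h]; exact hs.hi1
    · exact le_trans hs.hi1 (hs.himono 1 m le_rfl h h2).le
  have hilen : ∀ m : ℤ, 1 ≤ m → m ≤ (k : ℤ) → i m ≤ (n : ℤ) := by
    intro m h1 h2
    rcases eq_or_lt_of_le h2 with h | h
    · rw [h]; exact hs.hik
    · exact le_trans (hs.himono m k h1 h le_rfl).le hs.hik
  rcases eq_or_lt_of_le h0 with h | h
  · -- j = 0
    rw [← h, hs.hi0]
    rcases eq_or_lt_of_le hk with h2 | h2
    · rw [h2, hs.hitop]; positivity
    · exact lt_of_lt_of_le one_pos (hipos j' hj'1 (by omega))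
  · -- 1 ≤ j
    rcases eq_or_lt_of_le hk with h2 | h2
    · rw [h2, hs.hitop]
      exact lt_of_le_of_lt (hilen j (by omega) (by omega)) (by omega)
    · exact hs.himono j j' (by omega) hjj (by omega)

private lemma i_mono (hs : Setup n k x i ℓ) {j j' : ℤ} (h0 : 0 ≤ j) (hjj : j ≤ j')
    (hk : j' ≤ (k : ℤ) + 1) : i j ≤ i j' := by
  rcases eq_or_lt_of_le hjj with h | h
  · rw [h]
  · exact (i_smono hs h0 h hk).le

private lemma sigma_surj (hcard : Fintype.card A = n) {σ : A → ℤ}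
    (hinj : Function.Injective σ) (hrange : ∀ a, 1 ≤ σ a ∧ σ a ≤ (n : ℤ))
    {v : ℤ} (h1 : 1 ≤ v) (h2 : v ≤ (n : ℤ)) : ∃ a, σ a = v := by
  classical
  have himg : (Finset.univ.image σ) = Finset.Icc 1 (n : ℤ) := by
    apply Finset.eq_of_subset_of_card_le
    · intro b hb
      simp only [Finset.mem_image, Finset.mem_univ, true_and] at hb
      obtain ⟨a, ha⟩ := hb
      rw [← ha, Finset.mem_Icc]
      exact hrange a
    · rw [Finset.card_image_of_injective _ hinj, Finset.card_univ, hcard, Int.card_Icc]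
      omega
  have hv : v ∈ Finset.univ.image σ := by
    rw [himg, Finset.mem_Icc]; exact ⟨h1, h2⟩
  simpa using hv

private lemma core (hs : Setup n k x i ℓ) (e : ℤ)
    (σ : A → ℤ) (hσ : σ ∈ N n k x i ℓ e)
    {j : ℤ} (hj0 : 0 ≤ j) (hjk : j ≤ (k : ℤ))
    (hjl : e = 0 ∨ ((e = -1 ∨ e = 1) ∧ j ≠ ℓ - 1 ∧ j ≠ ℓ))
    {v : ℤ} (hv1 : i j + 1 ≤ v) (hv2 : v ≤ i (j + 1) - 1) :
    ∃ a ∈ beta k x j, σ a = v := by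
  obtain ⟨⟨hinj, hrange, hmono⟩, hfix, hlval⟩ := hσ
  have hl1 := hs.hl1
  have hlk := hs.hlk
  -- bounds on v
  have hij0 : 0 ≤ i j := by
    rcases eq_or_lt_of_le hj0 with h | h
    · rw [← h, hs.hi0]
    · have := i_smono hs (j := 0) (j' := j) le_rfl h (by omega)
      rw [hs.hi0] at this; omega
  have hijn : i (j + 1) ≤ (n : ℤ) + 1 := by
    have := i_mono hs (j := j + 1) (j' := (k : ℤ) + 1) (by omega) (by omega) le_rfl
    rw [hs.hitop] at this; omega
  obtain ⟨a, ha⟩ := sigma_surj hs.hcard hinj hrange (v := v) (by omega) (by omega)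
  -- key: σ (x m) ≠ v for all m ∈ [1,k]
  have key : ∀ m : ℤ, 1 ≤ m → m ≤ (k : ℤ) → σ (x m) ≠ v := by
    intro m h1 h2
    have hval : σ (x m) = i m + (if m = ℓ then e else 0) := by
      by_cases hm : m = ℓ
      · rw [if_pos hm, hm, hlval]
      · rw [if_neg hm, hfix m h1 h2 hm]; ring
    rw [hval]
    by_cases hmj : m ≤ j
    · -- i m + δ ≤ i j < v
      have him : i m ≤ i j := i_mono hs (by omega) hmj (by omega)
      by_cases hm : m = ℓ
      · rw [if_pos hm]
        rcases hjl with h | ⟨he, hne1, hne2⟩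
        · omega
        · have : m < j := by omega
          have := i_smono hs (j := m) (j' := j) (by omega) this (by omega)
          rcases he with h | h <;> omega
      · rw [if_neg hm]; omega
    · -- m ≥ j + 1 : i m + δ ≥ i (j+1) + δ > v
      have hmj' : j + 1 ≤ m := by omega
      have him : i (j + 1) ≤ i m := i_mono hs (by omega) hmj' (by omega)
      by_cases hm : m = ℓ
      · rw [if_pos hm]
        rcases hjl with h | ⟨he, hne1, hne2⟩
        · omega
        · have : j + 1 < m := by omega
          have := i_smono hs (j := j + 1) (j' := m) (by omega) this (by omega)
          rcases he with h | h <;> omega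
      · rw [if_neg hm]; omega
  refine ⟨a, ⟨⟨hj0, hjk⟩, ?_, ?_, ?_⟩, ha⟩
  · -- a ∈ alphaSet
    intro m h1 h2 hcontra
    exact key m h1 h2 (by rw [← hcontra, ha])
  · -- ¬ ltX
    rintro (h | ⟨h1, h2, h3⟩)
    · omega
    · have hle : σ a ≤ σ (x j) := hmono _ _ h3.le
      have hne : a ≠ x j := fun h => by simp [h] at h3
      have hlt : σ a < σ (x j) := lt_of_le_of_ne hle (fun h => hne (hinj h))
      have hval : σ (x j) = i j := by
        by_cases hm : j = ℓ
        · rcases hjl with h | ⟨he, hne1, hne2⟩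
          · rw [hm, hlval, h]; ring
          · exact absurd hm hne2
        · exact hfix j h1 h2 hm
      omega
  · -- ¬ gtX (j+1)
    rintro (h | ⟨h1, h2, h3⟩)
    · omega
    · have hle : σ (x (j + 1)) ≤ σ a := hmono _ _ h3.le
      have hne : x (j + 1) ≠ a := fun h => by simp [h] at h3
      have hlt : σ (x (j + 1)) < σ a := lt_of_le_of_ne hle (fun h => hne (hinj h))
      have hval : σ (x (j + 1)) = i (j + 1) := by
        by_cases hm : j + 1 = ℓ
        · rcases hjl with h | ⟨he, hne1, hne2⟩
          · rw [hm, hlval, h]; ring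
          · exact absurd (by omega : j = ℓ - 1) hne1
        · exact hfix (j + 1) h1 h2 hm
      omega

end Aux

/-- **Interval coverage by `β_j`** (Lemma 7.9).
(a) For every `σ ∈ N₌` and `j ∈ {0,…,k}` : `⟦i_j+1, i_{j+1}-1⟧ ⊆ σ(β_j)`, and
consequently for every `S ⊆ {0,…,k}` : `∪_{j ∈ S} ⟦i_j+1, i_{j+1}-1⟧ ⊆ σ(β_S)`.
(b) The same for `σ ∈ N₋ ∪ N₊` and `j ∈ {0,…,k} \ {ℓ-1,ℓ}`
(resp. `S ⊆ {0,…,k} \ {ℓ-1,ℓ}`). -/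
theorem interval_coverage
    {A : Type*} [PartialOrder A] [Fintype A]
    (n k : ℕ) (x : ℤ → A) (i : ℤ → ℤ) (ℓ : ℤ)
    (hsetup : Setup n k x i ℓ) :
    (∀ σ ∈ N n k x i ℓ 0,
      (∀ j : ℤ, 0 ≤ j → j ≤ (k : ℤ) → ∀ v : ℤ, i j + 1 ≤ v → v ≤ i (j + 1) - 1 →
        ∃ a ∈ beta k x j, σ a = v) ∧
      (∀ S : Finset ℤ, S ⊆ Finset.Icc 0 (k : ℤ) → ∀ v : ℤ,
        (∃ j ∈ S, i j + 1 ≤ v ∧ v ≤ i (j + 1) - 1) →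
        ∃ a : A, (∃ j ∈ S, a ∈ beta k x j) ∧ σ a = v)) ∧
    (∀ e : ℤ, (e = -1 ∨ e = 1) → ∀ σ ∈ N n k x i ℓ e,
      (∀ j : ℤ, 0 ≤ j → j ≤ (k : ℤ) → j ≠ ℓ - 1 → j ≠ ℓ → ∀ v : ℤ,
        i j + 1 ≤ v → v ≤ i (j + 1) - 1 → ∃ a ∈ beta k x j, σ a = v) ∧
      (∀ S : Finset ℤ, S ⊆ Finset.Icc 0 (k : ℤ) → (∀ j ∈ S, j ≠ ℓ - 1 ∧ j ≠ ℓ) →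
        ∀ v : ℤ, (∃ j ∈ S, i j + 1 ≤ v ∧ v ≤ i (j + 1) - 1) →
        ∃ a : A, (∃ j ∈ S, a ∈ beta k x j) ∧ σ a = v)) := by
  constructor
  · intro σ hσ
    constructor
    · intro j hj0 hjk v hv1 hv2
      exact core hsetup 0 σ hσ hj0 hjk (Or.inl rfl) hv1 hv2
    · intro S hS v ⟨j, hjS, hv1, hv2⟩
      have hj := hS hjS
      rw [Finset.mem_Icc] at hj
      obtain ⟨a, hab, ha⟩ := core hsetup 0 σ hσ hj.1 hj.2 (Or.inl rfl) hv1 hv2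
      exact ⟨a, ⟨j, hjS, hab⟩, ha⟩
  · intro e he σ hσ
    have he' := he
    constructor
    · intro j hj0 hjk hne1 hne2 v hv1 hv2
      exact core hsetup e σ hσ hj0 hjk (Or.inr ⟨he', hne1, hne2⟩) hv1 hv2
    · intro S hS hSl v ⟨j, hjS, hv1, hv2⟩
      have hj := hS hjS
      rw [Finset.mem_Icc] at hj
      obtain ⟨hne1, hne2⟩ := hSl j hjS
      obtain ⟨a, hab, ha⟩ :=
        core hsetup e σ hσ hj.1 hj.2 (Or.inr ⟨he', hne1, hne2⟩) hv1 hv2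
      exact ⟨a, ⟨j, hjS, hab⟩, ha⟩

end Stanley
end

section
/- (Exact count of mixed elements for ℓ-splitting pairs.) Fix an ℓ-splitting pair (r,s), fix ∘ ∈ {−,=,+}, and fix σ ∈ N_∘. Set c := (i_s − i_{r+1} − 1) − |ᾱ_{>x_{r+1},<x_s}|. Then there are exactly c distinct elements y ∈ β_r ∪ β_s such that i_{r+1} < σ(y) < i_s and σ(y) ≠ σ(x_j) for every j with r+1 < j < s. (This c is the combinatorial expression, via the linear–span dictionary, of the geometric quantity dim(Σ_{K∈K′} K) − |K′| for the collection K′ consisting of K_j with multiplicity i_{j+1}−i_j−1 for j ∈ {0,…,r} ∪ {s,…,k}.) -/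
open Pointwise

namespace Stanley

variable {A : Type*}

/-- **Exact count of mixed elements for `ℓ`-splitting pairs** (Lemma 7.10).
For an `ℓ`-splitting pair `(r,s)`, `∘ ∈ {-,=,+}` and `σ ∈ N_∘`, the number of
`y ∈ β_r ∪ β_s` with `i_{r+1} < σ(y) < i_s` and `σ(y) ≠ σ(x_j)` for all `r+1 < j < s`
is exactly `c = (i_s - i_{r+1} - 1) - |ᾱ_{>x_{r+1},<x_s}|`. -/
theorem mixed_element_count
    {A : Type*} [PartialOrder A] [Fintype A]
    (n k : ℕ) (x : ℤ → A) (i : ℤ → ℤ) (ℓ : ℤ)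
    (hsetup : Setup n k x i ℓ)
    (r s : ℤ) (hsp : SplitPair k r s) (hrl : r + 1 < ℓ) (hls : ℓ < s)
    (e : ℤ) (he : e = -1 ∨ e = 0 ∨ e = 1) (σ : A → ℤ) (hσ : σ ∈ N n k x i ℓ e) :
    (({ a : A | a ∈ beta k x r ∪ beta k x s ∧ i (r + 1) < σ a ∧ σ a < i s ∧
        ∀ j : ℤ, r + 1 < j → j < s → σ a ≠ σ (x j) }).ncard : ℤ) =
      i s - i (r + 1) - 1 - ((betw k x (r + 1) s).ncard : ℤ) := by
  classical
  obtain ⟨⟨hinj, hrange, hmono⟩, hx, hxl⟩ := hσ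
  obtain ⟨hr0, hrs, hsk, hne⟩ := hsp
  have ik1 : (1:ℤ) ≤ (k:ℤ) := by exact_mod_cast hsetup.hk1
  have ikn : (k:ℤ) ≤ (n:ℤ) := by exact_mod_cast hsetup.hkn
  have hl1 := hsetup.hl1
  have hlk := hsetup.hlk
  -- extended strict monotonicity of i on [0, k+1]
  have hile : ∀ m m' : ℤ, 1 ≤ m → m ≤ m' → m' ≤ (k:ℤ) → i m ≤ i m' := by
    intro m m' h1 h2 h3
    rcases eq_or_lt_of_le h2 with h | h
    · exact le_of_eq (by rw [h])
    · exact le_of_lt (hsetup.himono _ _ h1 h h3)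
  have imono : ∀ j j' : ℤ, 0 ≤ j → j < j' → j' ≤ (k:ℤ)+1 → i j < i j' := by
    intro j j' h0 hlt hle
    rcases eq_or_lt_of_le h0 with h0' | h0'
    · rcases eq_or_lt_of_le hle with h1' | h1'
      · rw [← h0', hsetup.hi0, h1', hsetup.hitop]; omega
      · rw [← h0', hsetup.hi0]
        calc (0:ℤ) < 1 := one_pos
          _ ≤ i 1 := hsetup.hi1
          _ ≤ i j' := hile 1 j' le_rfl (by omega) (by omega)
    · rcases eq_or_lt_of_le hle with h1' | h1'
      · rw [h1', hsetup.hitop]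
        calc i j ≤ i (k:ℤ) := hile j (k:ℤ) (by omega) (by omega) le_rfl
          _ ≤ (n:ℤ) := hsetup.hik
          _ < (n:ℤ)+1 := by omega
      · exact hsetup.himono j j' (by omega) hlt (by omega)
  have imole : ∀ j j' : ℤ, 0 ≤ j → j ≤ j' → j' ≤ (k:ℤ)+1 → i j ≤ i j' := by
    intro j j' h0 hlt hle
    rcases eq_or_lt_of_le hlt with h | h
    · exact le_of_eq (by rw [h])
    · exact le_of_lt (imono j j' h0 h hle)
  have hσlt : ∀ a b : A, a < b → σ a < σ b :=
    fun a b h => lt_of_le_of_ne (hmono a b h.le) (fun he' => (ne_of_lt h) (hinj he'))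
  set S : Set A := { a : A | a ∈ beta k x r ∪ beta k x s ∧ i (r + 1) < σ a ∧ σ a < i s ∧
        ∀ j : ℤ, r + 1 < j → j < s → σ a ≠ σ (x j) } with hSdef
  set B : Set A := betw k x (r+1) s with hBdef
  set T : Set A := { a : A | i (r+1) < σ a ∧ σ a < i s } with hTdef
  -- B ⊆ T
  have hBT : B ⊆ T := by
    rintro a ⟨hg, hl⟩
    constructor
    · rcases hg with h0 | ⟨h1, h2, h3⟩
      · rw [h0, hsetup.hi0]; linarith [(hrange a).1]
      · have hv : σ (x (r+1)) = i (r+1) := hx _ h1 h2 (by omega)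
        have := hσlt _ _ h3; omega
    · rcases hl with h0 | ⟨h1, h2, h3⟩
      · rw [h0, hsetup.hitop]; linarith [(hrange a).2]
      · have hv : σ (x s) = i s := hx _ h1 h2 (by omega)
        have := hσlt _ _ h3; omega
  have hST : S ⊆ T := by rintro a ⟨_, h1, h2, _⟩; exact ⟨h1, h2⟩
  -- T ⊆ S ∪ B
  have hTSB : T ⊆ S ∪ B := by
    rintro a ⟨h1, h2⟩
    by_cases hB' : a ∈ B
    · exact Or.inr hB'
    left
    have ha : a ∈ alphaSet k x := by
      intro j hj1 hjk heq
      by_cases hjl : r+1 < j ∧ j < s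
      · apply hB'
        constructor
        · by_cases h0 : r + 1 = 0
          · exact Or.inl h0
          · exact Or.inr ⟨by omega, by omega, by
              rw [heq]; exact hsetup.hchain _ _ (by omega) hjl.1 hjk⟩
        · by_cases hk1 : s = (k:ℤ)+1
          · exact Or.inl hk1
          · exact Or.inr ⟨by omega, by omega, by
              rw [heq]; exact hsetup.hchain _ _ hj1 hjl.2 (by omega)⟩
      · push_neg at hjl
        rcases le_or_gt j (r+1) with hc | hc
        · have h4 : σ a = i j := by rw [heq]; exact hx j hj1 hjk (by omega)
          have h5 : i j ≤ i (r+1) := imole j (r+1) (by omega) hc (by omega)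
          omega
        · have hsj : s ≤ j := hjl hc
          have h4 : σ a = i j := by rw [heq]; exact hx j hj1 hjk (by omega)
          have h5 : i s ≤ i j := imole s j (by omega) hsj (by omega)
          omega
    have hnB : ¬ (gtX k x (r+1) a ∧ ltX k x s a) := hB'
    refine ⟨?_, h1, h2, ?_⟩
    · by_cases hg : gtX k x (r+1) a
      · have hnl : ¬ ltX k x s a := fun h => hnB ⟨hg, h⟩
        right
        have hsk' : s ≤ (k:ℤ) := by
          have : s ≠ (k:ℤ)+1 := fun h => hnl (Or.inl h)
          omega
        refine ⟨⟨by omega, hsk'⟩, ha, hnl, ?_⟩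
        rintro (h0 | ⟨h1', h2', h3'⟩)
        · omega
        · have hv : σ (x (s+1)) = i (s+1) := hx _ h1' h2' (by omega)
          have hlt := hσlt _ _ h3'
          have : i s < i (s+1) := imono s (s+1) (by omega) (by omega) (by omega)
          omega
      · left
        have hr1 : 1 ≤ r+1 := by
          by_contra h; exact hg (Or.inl (by omega))
        refine ⟨⟨by omega, by omega⟩, ha, ?_, hg⟩
        rintro (h0 | ⟨h1', h2', h3'⟩)
        · omega
        · have hv : σ (x r) = i r := hx _ h1' h2' (by omega)
          have hlt := hσlt _ _ h3'
          have : i r < i (r+1) := imono r (r+1) (by omega) (by omega) (by omega)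
          omega
    · intro j hj1 hj2 heq
      exact ha j (by omega) (by omega) (hinj heq)
  have hdisj : Disjoint S B := by
    rw [Set.disjoint_left]
    rintro a ⟨hbeta, _, _, _⟩ ⟨hg, hl⟩
    rcases hbeta with ⟨_, _, _, hng⟩ | ⟨_, _, hnl, _⟩
    · exact hng hg
    · exact hnl hl
  -- surjectivity of σ onto [1, n]
  have hsurj : ∀ m : ℤ, 1 ≤ m → m ≤ (n:ℤ) → ∃ a, σ a = m := by
    intro m h1 h2
    have hsub : Finset.univ.image σ ⊆ Finset.Icc 1 (n:ℤ) := by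
      intro b hb
      obtain ⟨a, _, ha⟩ := Finset.mem_image.1 hb
      rw [Finset.mem_Icc, ← ha]; exact hrange a
    have hcard : (Finset.Icc (1:ℤ) (n:ℤ)).card ≤ (Finset.univ.image σ).card := by
      rw [Finset.card_image_of_injective _ hinj, Finset.card_univ, hsetup.hcard,
        Int.card_Icc]
      omega
    have heq := Finset.eq_of_subset_of_card_le hsub hcard
    have hm : m ∈ Finset.univ.image σ := by
      rw [heq]; exact Finset.mem_Icc.2 ⟨h1, h2⟩
    obtain ⟨a, _, ha⟩ := Finset.mem_image.1 hm
    exact ⟨a, ha⟩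
  have himg : σ '' T = Set.Ioo (i (r+1)) (i s) := by
    ext m
    constructor
    · rintro ⟨a, ⟨h1, h2⟩, rfl⟩; exact ⟨h1, h2⟩
    · rintro ⟨h1, h2⟩
      have hlow : 0 ≤ i (r+1) := by
        rw [← hsetup.hi0]; exact imole 0 (r+1) le_rfl hr0 (by omega)
      have hhigh : i s ≤ (n:ℤ)+1 := by
        rw [← hsetup.hitop]; exact imole s ((k:ℤ)+1) (by omega) hsk le_rfl
      obtain ⟨a, ha⟩ := hsurj m (by omega) (by omega)
      exact ⟨a, ⟨by omega, by omega⟩, ha⟩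
  have hTcard : (T.ncard : ℤ) = i s - i (r+1) - 1 := by
    have h1 : T.ncard = (σ '' T).ncard := (Set.ncard_image_of_injective T hinj).symm
    rw [himg] at h1
    have h2 : (Set.Ioo (i (r+1)) (i s)).ncard = (Finset.Ioo (i (r+1)) (i s)).card := by
      rw [← Finset.coe_Ioo, Set.ncard_coe_finset]
    have h3 : i (r+1) < i s := imono (r+1) s hr0 hrs hsk
    rw [h1, h2, Int.card_Ioo]
    omega
  have hcover : T = S ∪ B := Set.Subset.antisymm hTSB (Set.union_subset hST hBT)
  have hcard2 : T.ncard = S.ncard + B.ncard := by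
    rw [hcover]
    exact Set.ncard_union_eq hdisj (Set.toFinite _) (Set.toFinite _)
  omega


end Stanley
end
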